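/- Let M₁, …, M_Q ∈ Matrix (Fin n) (Fin n) ℂ and for a parameter define real coefficients θ(P) = (θ₁,…,θ_Q) ∈ ℝ^Q with M(P) = Σ_j θ_j M_j; write J(θ, y) = Σ_{1 ≤ j ≤ m ≤ Q} (2 − δ_{j,m}) θ_j θ_m y_{j,m} for y ∈ ℝ^{Q(Q+1)/2}. For any nonzero v ∈ ℂⁿ, the vector y(v) with entries y_{j,m}(v) = (v* ((M_j* M_m)^H) v)/(v* v) satisfies: (i) λ_min((M_j* M_m)^H) ≤ y_{j,m}(v) ≤ λ_max((M_j* M_m)^H) for all j ≤ m; and (ii) J(θ', y(v)) ≥ σ_min(Σ_j θ'_j M_j)² for every θ' ∈ ℝ^Q. Consequently, if v* is a nonzero vector achieving σ_min(M(P))² = (v*ᵀ̄ M(P)* M(P) v*)/(v*ᵀ̄ v*), then the infimum of J(θ(P), y) over all y satisfying the box constraints (i) and finitely many constraints J(θ(P_ℓ), y) ≥ σ_min(M(P_ℓ))² is at most σ_min(M(P))². -/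

import Mathlib

open Matrix

/-- Euclidean (ℓ²) norm of a complex vector. -/
noncomputable def vecNorm {n : ℕ} (v : Fin n → ℂ) : ℝ :=
  Real.sqrt (∑ i, ‖v i‖ ^ 2)

/-- Smallest singular value of a square complex matrix. -/
noncomputable def sigmaMin {n : ℕ} (M : Matrix (Fin n) (Fin n) ℂ) : ℝ :=
  ⨅ v : {v : Fin n → ℂ // vecNorm v = 1}, vecNorm (M.mulVec v.1)

/-- Hermitian part `N^H = (N + N*)/2` of a square complex matrix. -/
noncomputable def hermPart {n : ℕ} (N : Matrix (Fin n) (Fin n) ℂ) :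
    Matrix (Fin n) (Fin n) ℂ :=
  (2⁻¹ : ℂ) • (N + Nᴴ)

/-- Rayleigh quotient of a square complex matrix (real part). -/
noncomputable def rayleigh {n : ℕ} (N : Matrix (Fin n) (Fin n) ℂ) (v : Fin n → ℂ) : ℝ :=
  (star v ⬝ᵥ N.mulVec v).re / ∑ i, ‖v i‖ ^ 2

/-- Smallest (real) eigenvalue of a Hermitian matrix, via the Rayleigh quotient. -/
noncomputable def lamMin {n : ℕ} (N : Matrix (Fin n) (Fin n) ℂ) : ℝ :=
  ⨅ v : {v : Fin n → ℂ // v ≠ 0}, rayleigh N v.1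

/-- Largest (real) eigenvalue of a Hermitian matrix, via the Rayleigh quotient. -/
noncomputable def lamMax {n : ℕ} (N : Matrix (Fin n) (Fin n) ℂ) : ℝ :=
  ⨆ v : {v : Fin n → ℂ // v ≠ 0}, rayleigh N v.1

/-- The SCM objective `J(θ, y) = Σ_{j ≤ m} (2 - δ_{j,m}) θ_j θ_m y_{j,m}`. -/
noncomputable def scmJ {Q : ℕ} (θ : Fin Q → ℝ) (y : Fin Q → Fin Q → ℝ) : ℝ :=
  ∑ j : Fin Q, ∑ m ∈ Finset.Ici j, (if j = m then 1 else 2 : ℝ) * θ j * θ m * y j m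

/-- The exact Rayleigh-quotient vector `y(v)` with entries
`y_{j,m}(v) = v* (M_j* M_m)^H v / (v* v)`. -/
noncomputable def scmY {n Q : ℕ} (M : Fin Q → Matrix (Fin n) (Fin n) ℂ) (v : Fin n → ℂ) :
    Fin Q → Fin Q → ℝ :=
  fun j m => rayleigh (hermPart ((M j)ᴴ * M m)) v

/-!
The Rayleigh quotients of a fixed `N` are bounded by `Σ_{i,j} ‖N_ij‖`, so `λ_min` and `λ_max`,
being their infimum and supremum, bracket each of them: this is (i). The Rayleigh quotient is
real-linear in `N` and invariant under `N ↦ N*`, hence also under `N ↦ N^H`; so `y(v)` is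
symmetric, and expanding `M(θ)* M(θ) = Σ_{j,m} θ_j θ_m M_j* M_m` and folding the symmetric double
sum onto `j ≤ m` gives `J(θ, y(v)) = ‖M(θ) v‖² / ‖v‖² ≥ σ_min(M(θ))²`, which is (ii). Thus `y(v)`
is feasible for the linear program for every `v ≠ 0`, and at a minimising `v*` its objective
value is `σ_min(M(θ))²`.
-/

open Matrix Finset

section RayleighQuotient

variable {n : ℕ}

lemma sum_norm_sq_pos {v : Fin n → ℂ} (hv : v ≠ 0) : 0 < ∑ i, ‖v i‖ ^ 2 := by
  obtain ⟨i, hi⟩ := Function.ne_iff.1 hv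
  exact sum_pos' (fun _ _ => by positivity) ⟨i, mem_univ i, pow_pos (norm_pos_iff.2 hi) 2⟩

lemma re_star_dotProduct_self (w : Fin n → ℂ) : (star w ⬝ᵥ w).re = ∑ i, ‖w i‖ ^ 2 := by
  simp only [dotProduct, Complex.re_sum]
  refine sum_congr rfl fun i _ => ?_
  rw [Pi.star_apply, Complex.star_def, mul_comm, Complex.mul_conj, Complex.normSq_eq_norm_sq]
  norm_cast

lemma star_dotProduct_conjTranspose_mulVec (N : Matrix (Fin n) (Fin n) ℂ) (v : Fin n → ℂ) :
    star v ⬝ᵥ Nᴴ *ᵥ v = star (star v ⬝ᵥ N *ᵥ v) := by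
  rw [star_dotProduct, star_mulVec, conjTranspose_conjTranspose, ← dotProduct_mulVec]

lemma rayleigh_sum {ι : Type*} (s : Finset ι) (N : ι → Matrix (Fin n) (Fin n) ℂ)
    (v : Fin n → ℂ) : rayleigh (∑ i ∈ s, N i) v = ∑ i ∈ s, rayleigh (N i) v := by
  simp only [rayleigh, sum_mulVec, dotProduct_sum, Complex.re_sum, sum_div]

lemma rayleigh_add (N N' : Matrix (Fin n) (Fin n) ℂ) (v : Fin n → ℂ) :
    rayleigh (N + N') v = rayleigh N v + rayleigh N' v := by
  simp only [rayleigh, add_mulVec, dotProduct_add, Complex.add_re, add_div]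

lemma rayleigh_ofReal_smul (c : ℝ) (N : Matrix (Fin n) (Fin n) ℂ) (v : Fin n → ℂ) :
    rayleigh ((c : ℂ) • N) v = c * rayleigh N v := by
  rw [rayleigh, rayleigh, smul_mulVec, dotProduct_smul, smul_eq_mul, Complex.re_ofReal_mul,
    mul_div_assoc]

lemma rayleigh_conjTranspose (N : Matrix (Fin n) (Fin n) ℂ) (v : Fin n → ℂ) :
    rayleigh Nᴴ v = rayleigh N v := by
  rw [rayleigh, rayleigh, star_dotProduct_conjTranspose_mulVec, Complex.star_def,
    Complex.conj_re]

lemma rayleigh_hermPart (N : Matrix (Fin n) (Fin n) ℂ) (v : Fin n → ℂ) :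
    rayleigh (hermPart N) v = rayleigh N v := by
  rw [hermPart, show (2⁻¹ : ℂ) = ((2⁻¹ : ℝ) : ℂ) by push_cast; rfl, rayleigh_ofReal_smul,
    rayleigh_add, rayleigh_conjTranspose]
  ring

lemma abs_rayleigh_le (N : Matrix (Fin n) (Fin n) ℂ) {v : Fin n → ℂ} (hv : v ≠ 0) :
    |rayleigh N v| ≤ ∑ i, ∑ j, ‖N i j‖ := by
  set S := ∑ i, ‖v i‖ ^ 2
  have hS : 0 < S := sum_norm_sq_pos hv
  have hvv : ∀ i j, ‖v i‖ * ‖v j‖ ≤ S := fun i j => by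
    have hi := single_le_sum (f := fun k => ‖v k‖ ^ 2) (fun _ _ => by positivity) (mem_univ i)
    have hj := single_le_sum (f := fun k => ‖v k‖ ^ 2) (fun _ _ => by positivity) (mem_univ j)
    nlinarith [norm_nonneg (v i), norm_nonneg (v j)]
  rw [rayleigh, abs_div, abs_of_pos hS, div_le_iff₀ hS]
  calc |(star v ⬝ᵥ N *ᵥ v).re| ≤ ‖star v ⬝ᵥ N *ᵥ v‖ := Complex.abs_re_le_norm _
    _ = ‖∑ i, ∑ j, star (v i) * (N i j * v j)‖ := by
        simp only [dotProduct, mulVec, mul_sum, Pi.star_apply]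
    _ ≤ ∑ i, ∑ j, ‖v i‖ * (‖N i j‖ * ‖v j‖) := by
        refine (norm_sum_le _ _).trans (sum_le_sum fun i _ => (norm_sum_le _ _).trans ?_)
        simp only [norm_mul, norm_star, le_refl]
    _ ≤ ∑ i, ∑ j, ‖N i j‖ * S := by
        refine sum_le_sum fun i _ => sum_le_sum fun j _ => ?_
        linarith [mul_le_mul_of_nonneg_left (hvv i j) (norm_nonneg (N i j))]
    _ = (∑ i, ∑ j, ‖N i j‖) * S := by simp only [sum_mul]

lemma lamMin_le_rayleigh (N : Matrix (Fin n) (Fin n) ℂ) {v : Fin n → ℂ} (hv : v ≠ 0) :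
    lamMin N ≤ rayleigh N v := by
  refine ciInf_le ⟨-∑ i, ∑ j, ‖N i j‖, ?_⟩ (⟨v, hv⟩ : {v : Fin n → ℂ // v ≠ 0})
  rintro _ ⟨u, rfl⟩
  exact neg_le_of_abs_le (abs_rayleigh_le N u.2)

lemma rayleigh_le_lamMax (N : Matrix (Fin n) (Fin n) ℂ) {v : Fin n → ℂ} (hv : v ≠ 0) :
    rayleigh N v ≤ lamMax N := by
  refine le_ciSup (f := fun u : {v : Fin n → ℂ // v ≠ 0} => rayleigh N u.1)
    ⟨∑ i, ∑ j, ‖N i j‖, ?_⟩ ⟨v, hv⟩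
  rintro _ ⟨u, rfl⟩
  exact le_of_abs_le (abs_rayleigh_le N u.2)

end RayleighQuotient

section SmallestSingularValue

variable {n : ℕ}

lemma vecNorm_sq (v : Fin n → ℂ) : vecNorm v ^ 2 = ∑ i, ‖v i‖ ^ 2 :=
  Real.sq_sqrt (sum_nonneg fun _ _ => by positivity)

lemma vecNorm_smul (c : ℂ) (v : Fin n → ℂ) : vecNorm (c • v) = ‖c‖ * vecNorm v := by
  rw [vecNorm, vecNorm, ← Real.sqrt_sq (norm_nonneg c), ← Real.sqrt_mul (by positivity), mul_sum]
  simp only [Pi.smul_apply, smul_eq_mul, norm_mul, mul_pow]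

lemma vecNorm_pos {v : Fin n → ℂ} (hv : v ≠ 0) : 0 < vecNorm v :=
  Real.sqrt_pos.2 (sum_norm_sq_pos hv)

lemma rayleigh_conjTranspose_mul_self (N : Matrix (Fin n) (Fin n) ℂ) (v : Fin n → ℂ) :
    rayleigh (Nᴴ * N) v = vecNorm (N *ᵥ v) ^ 2 / vecNorm v ^ 2 := by
  rw [rayleigh, ← mulVec_mulVec, dotProduct_mulVec, ← star_mulVec, re_star_dotProduct_self,
    vecNorm_sq, vecNorm_sq]

lemma sigmaMin_nonneg (N : Matrix (Fin n) (Fin n) ℂ) : 0 ≤ sigmaMin N :=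
  Real.iInf_nonneg fun _ => Real.sqrt_nonneg _

lemma sigmaMin_mul_vecNorm_le (N : Matrix (Fin n) (Fin n) ℂ) {v : Fin n → ℂ} (hv : v ≠ 0) :
    sigmaMin N * vecNorm v ≤ vecNorm (N *ᵥ v) := by
  have hpos := vecNorm_pos hv
  set c : ℂ := (((vecNorm v)⁻¹ : ℝ) : ℂ)
  have hc : ‖c‖ = (vecNorm v)⁻¹ := by
    rw [Complex.norm_real, Real.norm_of_nonneg (inv_nonneg.2 hpos.le)]
  have hunit : vecNorm (c • v) = 1 := by rw [vecNorm_smul, hc, inv_mul_cancel₀ hpos.ne']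
  have hle : sigmaMin N ≤ vecNorm (N *ᵥ (c • v)) :=
    ciInf_le ⟨0, by rintro _ ⟨w, rfl⟩; exact Real.sqrt_nonneg _⟩
      (⟨c • v, hunit⟩ : {w : Fin n → ℂ // vecNorm w = 1})
  rwa [mulVec_smul, vecNorm_smul, hc, inv_mul_eq_div, le_div_iff₀ hpos] at hle

lemma sigmaMin_sq_le_rayleigh (N : Matrix (Fin n) (Fin n) ℂ) {v : Fin n → ℂ} (hv : v ≠ 0) :
    sigmaMin N ^ 2 ≤ rayleigh (Nᴴ * N) v := by
  rw [rayleigh_conjTranspose_mul_self, le_div_iff₀ (pow_pos (vecNorm_pos hv) 2), ← mul_pow]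
  exact pow_le_pow_left₀ (mul_nonneg (sigmaMin_nonneg N) (vecNorm_pos hv).le)
    (sigmaMin_mul_vecNorm_le N hv) 2

end SmallestSingularValue

lemma sum_Ici_ite_mul_eq_sum_of_symm {ι R : Type*} [Fintype ι] [LinearOrder ι]
    [LocallyFiniteOrderTop ι] [LocallyFiniteOrderBot ι] [Semiring R] (f : ι → ι → R) (hf : ∀ j m, f m j = f j m) :
    ∑ j, ∑ m ∈ Ici j, (if j = m then 1 else 2 : R) * f j m = ∑ j, ∑ m, f j m := by
  have hdiag : ∀ j, ∑ m ∈ Ici j, (if j = m then 1 else 2 : R) * f j m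
      = ∑ m ∈ Ici j, f j m + ∑ m ∈ Ioi j, f j m := fun j => by
    rw [Ici_eq_cons_Ioi, sum_cons, sum_cons, if_pos rfl, one_mul, add_assoc,
      ← sum_add_distrib]
    congr 1
    refine sum_congr rfl fun m hm => ?_
    rw [if_neg (ne_of_lt (mem_Ioi.1 hm)), two_mul]
  have hswap : ∑ j, ∑ m ∈ Ioi j, f j m = ∑ j, ∑ m ∈ Iio j, f j m := by
    rw [sum_comm' (t' := univ) (s' := Iio) (by simp)]
    exact sum_congr rfl fun j _ => sum_congr rfl fun m _ => hf j m
  have hsplit : ∀ j, ∑ m ∈ Iio j, f j m + ∑ m ∈ Ici j, f j m = ∑ m, f j m := fun j => by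
    rw [← sum_filter_add_sum_filter_not univ (· < j)]
    simp only [not_lt, filter_gt_eq_Iio, filter_le_eq_Ici]
  simp only [hdiag, sum_add_distrib, hswap, ← hsplit, add_comm]

-- In `ℝ`, `sInf` of a set that is not bounded below is `0`.
lemma Real.sInf_le_of_mem_of_nonneg {s : Set ℝ} {a : ℝ} (ha : a ∈ s) (ha₀ : 0 ≤ a) :
    sInf s ≤ a := by
  by_cases hs : BddBelow s
  · exact csInf_le hs ha
  · rwa [Real.sInf_of_not_bddBelow hs]

section SCM

variable {n Q : ℕ} (M : Fin Q → Matrix (Fin n) (Fin n) ℂ)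

lemma scmY_comm (v : Fin n → ℂ) (j m : Fin Q) : scmY M v m j = scmY M v j m := by
  rw [scmY, scmY, rayleigh_hermPart, rayleigh_hermPart, ← rayleigh_conjTranspose,
    conjTranspose_mul, conjTranspose_conjTranspose]

lemma rayleigh_gram_sum_smul (θ : Fin Q → ℝ) (v : Fin n → ℂ) :
    rayleigh ((∑ j, (θ j : ℂ) • M j)ᴴ * ∑ j, (θ j : ℂ) • M j) v
      = ∑ j, ∑ m, θ j * θ m * rayleigh ((M j)ᴴ * M m) v := by
  simp only [conjTranspose_sum, conjTranspose_smul, Complex.star_def, Complex.conj_ofReal,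
    sum_mul, mul_sum, smul_mul_smul_comm, ← Complex.ofReal_mul, rayleigh_sum,
    rayleigh_ofReal_smul]
  exact sum_comm

lemma scmJ_scmY (θ : Fin Q → ℝ) (v : Fin n → ℂ) :
    scmJ θ (scmY M v) = rayleigh ((∑ j, (θ j : ℂ) • M j)ᴴ * ∑ j, (θ j : ℂ) • M j) v := by
  calc scmJ θ (scmY M v)
      = ∑ j, ∑ m ∈ Ici j, (if j = m then 1 else 2 : ℝ) * (θ j * θ m * scmY M v j m) := by
        simp only [scmJ, mul_assoc]
    _ = ∑ j, ∑ m, θ j * θ m * scmY M v j m :=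
        sum_Ici_ite_mul_eq_sum_of_symm _ fun j m => by rw [scmY_comm]; ring
    _ = _ := by simp only [scmY, rayleigh_hermPart, rayleigh_gram_sum_smul]

variable {M}

lemma scmY_mem_eigenvalue_box {v : Fin n → ℂ} (hv : v ≠ 0) (j m : Fin Q) :
    lamMin (hermPart ((M j)ᴴ * M m)) ≤ scmY M v j m ∧
      scmY M v j m ≤ lamMax (hermPart ((M j)ᴴ * M m)) :=
  ⟨lamMin_le_rayleigh _ hv, rayleigh_le_lamMax _ hv⟩

lemma sigmaMin_sq_le_scmJ_scmY {v : Fin n → ℂ} (hv : v ≠ 0) (θ : Fin Q → ℝ) :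
    sigmaMin (∑ j, (θ j : ℂ) • M j) ^ 2 ≤ scmJ θ (scmY M v) := by
  rw [scmJ_scmY]
  exact sigmaMin_sq_le_rayleigh _ hv

end SCM

/-- Feasibility of the exact Rayleigh-quotient vector for the SCM linear program:
(i) box constraints by extremal eigenvalues, (ii) the lower-bound constraints for every
coefficient vector; consequently the SCM linear-program value is at most `σ_min(M(P))²`
whenever the latter is attained by some nonzero vector. -/
theorem stmt7 {n Q : ℕ} (M : Fin Q → Matrix (Fin n) (Fin n) ℂ) (θ : Fin Q → ℝ)
    (v : Fin n → ℂ) (hv : v ≠ 0) :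
    (∀ j m : Fin Q, j ≤ m →
        lamMin (hermPart ((M j)ᴴ * M m)) ≤ scmY M v j m ∧
          scmY M v j m ≤ lamMax (hermPart ((M j)ᴴ * M m))) ∧
      (∀ θ' : Fin Q → ℝ,
        sigmaMin (∑ j, (θ' j : ℂ) • M j) ^ 2 ≤ scmJ θ' (scmY M v)) ∧
      ∀ vstar : Fin n → ℂ, vstar ≠ 0 →
        sigmaMin (∑ j, (θ j : ℂ) • M j) ^ 2
            = rayleigh ((∑ j, (θ j : ℂ) • M j)ᴴ * ∑ j, (θ j : ℂ) • M j) vstar →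
        ∀ (k : ℕ) (θs : Fin k → Fin Q → ℝ),
          sInf {t : ℝ | ∃ y : Fin Q → Fin Q → ℝ,
              (∀ j m : Fin Q, j ≤ m →
                lamMin (hermPart ((M j)ᴴ * M m)) ≤ y j m ∧
                  y j m ≤ lamMax (hermPart ((M j)ᴴ * M m))) ∧
              (∀ ℓ : Fin k, sigmaMin (∑ j, (θs ℓ j : ℂ) • M j) ^ 2 ≤ scmJ (θs ℓ) y) ∧
              t = scmJ θ y}
            ≤ sigmaMin (∑ j, (θ j : ℂ) • M j) ^ 2 := by
  refine ⟨fun j m _ => scmY_mem_eigenvalue_box hv j m, sigmaMin_sq_le_scmJ_scmY hv,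
    fun vstar hvstar hattained k θs => ?_⟩
  refine Real.sInf_le_of_mem_of_nonneg ⟨scmY M vstar,
    fun j m _ => scmY_mem_eigenvalue_box hvstar j m,
    fun ℓ => sigmaMin_sq_le_scmJ_scmY hvstar (θs ℓ), ?_⟩ (sq_nonneg _)
  rw [scmJ_scmY, hattained]
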